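/- Let p be an odd prime and let m, ν₁, ν₂ be integers such that p does not divide 6m, p does not divide ν₁, and p does not divide ν₂. Then p · Σ_{(x₁,x₂) ∈ (ℤ/pℤ)²} e( 6m(ν₁x₁² + ν₂x₂²) ) = p² · (−ν₁ν₂ / p), where e(a) = exp(2π√−1 · ā / p) and (·/p) is the Legendre symbol. (This complex number is the reduced quandle cocycle invariant Φ̃_p(𝒮₃(a, Δ̃^{2m})) for a = ∏_j σ₁^{pk_{1,j}} σ₂^{pk_{2,j}} with ν_i = Σ_j k_{i,j}.) -/

import Mathlib

/-- The additive character `e : ℤ/pℤ → ℂ`, `e(a) = exp(2π√-1 · ā / p)`, where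
`ā ∈ {0, …, p-1}` is the representative of `a`. -/
noncomputable def zmodChar (p : ℕ) (a : ZMod p) : ℂ :=
  Complex.exp (2 * Real.pi * Complex.I * (a.val : ℂ) / (p : ℂ))

/-!
Write `c = 6m`. Since the character is additive, the double sum factors as the product of the
one-variable sums `∑ₓ e(c νᵢ x²)`. Counting square roots, `∑ₓ ψ(b x²) = ∑ₜ (χ(t) + 1) ψ(b t)` for
the quadratic character `χ`, and the term `∑ₜ ψ(b t)` vanishes, so each factor is the twisted
Gauss sum `χ(b) g`. Hence the product is `χ(c² ν₁ ν₂) g² = χ(ν₁ ν₂) χ(-1) p = (-ν₁ν₂/p) p`.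
-/

open Finset

section QuadraticSums

variable {F R : Type*} [Field F] [Fintype F] [DecidableEq F] [CommRing R]

theorem sum_comp_sq_eq_sum_quadraticChar_add_one (hF : ringChar F ≠ 2) (f : F → R) :
    ∑ x, f (x ^ 2) = ∑ t, ((quadraticChar F t : R) + 1) * f t := by
  rw [← sum_fiberwise univ (fun x : F => x ^ 2) (fun x => f (x ^ 2))]
  refine sum_congr rfl fun t _ => ?_
  have hcard : (#{x : F | x ^ 2 = t} : R) = quadraticChar F t + 1 := by
    have h := quadraticChar_card_sqrts hF t
    rw [Set.toFinset_ofPred] at h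
    exact_mod_cast congrArg (Int.cast : ℤ → R) h
  rw [← hcard, ← nsmul_eq_mul, ← sum_const]
  exact sum_congr rfl fun x hx => by rw [(mem_filter.mp hx).2]

theorem quadraticChar_ringHomComp_ne_one [Nontrivial R] (hF : ringChar F ≠ 2)
    (hR : ringChar R ≠ 2) :
    (quadraticChar F).ringHomComp (Int.castRingHom R) ≠ 1 := by
  obtain ⟨a, ha⟩ := quadraticChar_exists_neg_one' hF
  refine MulChar.ne_one_iff.mpr ⟨a, ?_⟩
  rw [MulChar.ringHomComp_apply, ha, map_neg, map_one]
  exact Ring.neg_one_ne_one_of_char_ne_two hR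

variable [IsDomain R] {ψ : AddChar F R}

theorem sum_addChar_mul_sq (hF : ringChar F ≠ 2) (hψ : ψ.IsPrimitive) {b : F} (hb : b ≠ 0) :
    ∑ x, ψ (b * x ^ 2) =
      quadraticChar F b * gaussSum ((quadraticChar F).ringHomComp (Int.castRingHom R)) ψ := by
  set χ := (quadraticChar F).ringHomComp (Int.castRingHom R)
  calc ∑ x, ψ (b * x ^ 2)
      = ∑ t, ((quadraticChar F t : R) + 1) * ψ.mulShift b t :=
        sum_comp_sq_eq_sum_quadraticChar_add_one hF (ψ.mulShift b)
    _ = gaussSum χ (ψ.mulShift b) + ∑ t, ψ.mulShift b t := by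
        simp only [add_mul, one_mul, sum_add_distrib]
        rfl
    _ = χ b * gaussSum χ ψ := by
        rw [AddChar.sum_eq_zero_of_ne_one (hψ hb), add_zero]
        have hχ : χ⁻¹ = χ := ((quadraticChar_isQuadratic F).comp _).inv
        simpa [hχ] using gaussSum_mulShift_eq χ ψ (Units.mk0 b hb)

theorem sum_addChar_mul_sq_add_mul_sq (hF : ringChar F ≠ 2) (hR : ringChar R ≠ 2)
    (hψ : ψ.IsPrimitive) {a b : F} (ha : a ≠ 0) (hb : b ≠ 0) :
    ∑ x : F × F, ψ (a * x.1 ^ 2 + b * x.2 ^ 2) =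
      quadraticChar F (-(a * b)) * Fintype.card F := by
  set χ := (quadraticChar F).ringHomComp (Int.castRingHom R)
  have hgauss : gaussSum χ ψ ^ 2 = quadraticChar F (-1) * Fintype.card F :=
    gaussSum_sq (quadraticChar_ringHomComp_ne_one hF hR) ((quadraticChar_isQuadratic F).comp _) hψ
  simp only [Fintype.sum_prod_type, AddChar.map_add_eq_mul, ← mul_sum, ← sum_mul]
  rw [sum_addChar_mul_sq hF hψ ha, sum_addChar_mul_sq hF hψ hb,
    mul_mul_mul_comm, ← sq, hgauss, neg_eq_neg_one_mul (a * b), map_mul, map_mul]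
  push_cast
  ring

end QuadraticSums

theorem zmodChar_eq_stdAddChar (p : ℕ) [NeZero p] (a : ZMod p) :
    zmodChar p a = ZMod.stdAddChar a := by
  rw [ZMod.stdAddChar_apply, ZMod.toCircle_apply, zmodChar]

/-- For an odd prime `p` and integers `m, ν₁, ν₂` with `p ∤ 6m`, `p ∤ ν₁`, `p ∤ ν₂`,
the reduced quandle cocycle invariant
`p · Σ_{(x₁,x₂) ∈ (ℤ/pℤ)²} e(6m(ν₁x₁² + ν₂x₂²))` equals `p² · (-ν₁ν₂/p)`, where
`(·/p)` is the Legendre symbol. -/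
theorem reduced_cocycle_invariant_degree_three (p : ℕ) [Fact p.Prime] (hp : Odd p)
    (m ν₁ ν₂ : ℤ) (hm : ¬ (p : ℤ) ∣ 6 * m) (hν₁ : ¬ (p : ℤ) ∣ ν₁) (hν₂ : ¬ (p : ℤ) ∣ ν₂) :
    (p : ℂ) * ∑ x : ZMod p × ZMod p,
        zmodChar p (((6 * m : ℤ) : ZMod p) *
          ((ν₁ : ZMod p) * x.1 ^ 2 + (ν₂ : ZMod p) * x.2 ^ 2)) =
      (p : ℂ) ^ 2 * (legendreSym p (-ν₁ * ν₂) : ℂ) := by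
  have hF : ringChar (ZMod p) ≠ 2 := by
    rw [ZMod.ringChar_zmod_n]
    rintro rfl
    exact Nat.not_odd_iff_even.mpr even_two hp
  have hcast {n : ℤ} (hn : ¬ (p : ℤ) ∣ n) : (n : ZMod p) ≠ 0 :=
    (ZMod.intCast_zmod_eq_zero_iff_dvd n p).not.mpr hn
  set c : ZMod p := ((6 * m : ℤ) : ZMod p)
  have hc : c ≠ 0 := hcast hm
  have hsquare : -(c * ν₁ * (c * ν₂)) = c ^ 2 * ((-ν₁ * ν₂ : ℤ) : ZMod p) := by
    push_cast
    ring
  simp only [zmodChar_eq_stdAddChar, mul_add, ← mul_assoc]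
  rw [sum_addChar_mul_sq_add_mul_sq hF (by simp) (ZMod.isPrimitive_stdAddChar p)
      (mul_ne_zero hc (hcast hν₁)) (mul_ne_zero hc (hcast hν₂)),
    hsquare, map_mul, quadraticChar_sq_one' hc, one_mul, ZMod.card, ← legendreSym]
  ring
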